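/- Let W be a reduced word in 𝓕. Then there exists a factorization W = U₁U₂⁻¹ with |W| = |U₁| + |U₂|, where each of U₁, U₂ is either the empty word or a strongly positive word. -/

import Mathlib

/-!
Choose a prefix `U₁` of `W` whose value in `𝓕` is maximal among the values of all prefixes of `W`,
and write `W = U₁ V`, `U₂ = V⁻¹`. Distinct prefixes of a reduced word are themselves distinct
reduced words, hence have distinct values, so the maximum is strict. By left invariance, a proper
prefix `Q` with `U₁ = Q S` and `Q ≺ Q S` gives `S ≻ 1`, and a nonempty prefix `R` of `V`
with `U₁ R ≺ U₁` gives `R ≺ 1`, i.e. `R⁻¹ ≻ 1`; these are exactly the suffixes of `U₁` and `U₂`.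
-/

open Monoid

variable {I : Type*} {G : I → Type*} [∀ i, Group (G i)]

/-- The element of the free product represented by a list of letters. -/
def listProd (l : List (Σ i, G i)) : CoprodI G :=
  (l.map fun p => CoprodI.of p.2).prod

/-- The formal inverse of a list of letters. -/
def invList (l : List (Σ i, G i)) : List (Σ i, G i) :=
  (l.map fun p => (⟨p.1, p.2⁻¹⟩ : Σ i, G i)).reverse

/-- A list of letters (of a reduced word) is *strongly positive* if every
nonempty suffix, viewed as an element of the free product, is `≻ 1`. -/
def StronglyPositiveList [LinearOrder (CoprodI G)] (l : List (Σ i, G i)) : Prop :=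
  ∀ j < l.length, 1 < listProd (l.drop j)

lemma listProd_append (a b : List (Σ i, G i)) :
    listProd (a ++ b) = listProd a * listProd b := by
  simp [listProd]

lemma listProd_invList (l : List (Σ i, G i)) : listProd (invList l) = (listProd l)⁻¹ := by
  simp [listProd, invList, List.prod_inv_reverse, Function.comp_def]

lemma invList_invList (l : List (Σ i, G i)) : invList (invList l) = l := by
  simp [invList, List.map_reverse, Function.comp_def]

lemma length_invList (l : List (Σ i, G i)) : (invList l).length = l.length := by
  simp [invList]

lemma drop_invList (l : List (Σ i, G i)) (j : ℕ) :
    (invList l).drop j = invList (l.take (l.length - j)) := by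
  simp [invList, List.drop_reverse, List.map_take]

def Monoid.CoprodI.Word.ofIsPrefix (W : CoprodI.Word G) {l : List (Σ i, G i)}
    (h : l <+: W.toList) : CoprodI.Word G where
  toList := l
  ne_one x hx := W.ne_one x (h.subset hx)
  chain_ne := W.chain_ne.infix h.isInfix

lemma eq_of_isPrefix_of_listProd_eq {W : CoprodI.Word G} {l₁ l₂ : List (Σ i, G i)}
    (h₁ : l₁ <+: W.toList) (h₂ : l₂ <+: W.toList) (h : listProd l₁ = listProd l₂) :
    l₁ = l₂ := by
  classical
  exact congrArg CoprodI.Word.toList <|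
    CoprodI.Word.equiv.symm.injective (a₁ := W.ofIsPrefix h₁) (a₂ := W.ofIsPrefix h₂) h

lemma exists_isPrefix_forall_listProd_lt [LinearOrder (CoprodI G)] (W : CoprodI.Word G) :
    ∃ p, p <+: W.toList ∧ ∀ q, q <+: W.toList → q ≠ p → listProd q < listProd p := by
  classical
  obtain ⟨p, hp, hmax⟩ := W.toList.inits.toFinset.exists_max_image listProd
    ⟨[], by simp⟩
  simp only [List.mem_toFinset, List.mem_inits] at hp hmax
  exact ⟨p, hp, fun q hq hqp =>
    (hmax q hq).lt_of_ne fun h => hqp (eq_of_isPrefix_of_listProd_eq hq hp h)⟩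

section StronglyPositive

variable [LinearOrder (CoprodI G)] [CovariantClass (CoprodI G) (CoprodI G) (· * ·) (· ≤ ·)]

lemma stronglyPositiveList_of_forall_isPrefix_lt {l : List (Σ i, G i)}
    (h : ∀ q, q <+: l → q ≠ l → listProd q < listProd l) : StronglyPositiveList l := by
  intro j hj
  have hlt := h (l.take j) (l.take_prefix j) fun he => by
    simpa [List.length_take, hj.not_ge] using congrArg List.length he
  have hl : listProd l = listProd (l.take j) * listProd (l.drop j) := by
    rw [← listProd_append, List.take_append_drop]
  rwa [hl, lt_mul_iff_one_lt_right'] at hlt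

lemma stronglyPositiveList_invList_of_forall_isPrefix_lt_one {l : List (Σ i, G i)}
    (h : ∀ q, q <+: l → q ≠ [] → listProd q < 1) : StronglyPositiveList (invList l) := by
  intro j hj
  rw [length_invList] at hj
  rw [drop_invList, listProd_invList, Left.one_lt_inv_iff]
  refine h _ (l.take_prefix _) ?_
  simp only [ne_eq, ← List.length_eq_zero_iff, List.length_take]
  omega

end StronglyPositive

theorem exists_factorization_stronglyPositive_general
    {I : Type*} {G : I → Type*} [∀ i, Group (G i)]
    [LinearOrder (CoprodI G)]
    [CovariantClass (CoprodI G) (CoprodI G) (· * ·) (· ≤ ·)]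
    (W : CoprodI.Word G) :
    ∃ l₁ l₂ : List (Σ i, G i),
      W.toList = l₁ ++ invList l₂ ∧
      (l₁ = [] ∨ StronglyPositiveList l₁) ∧
      (l₂ = [] ∨ StronglyPositiveList l₂) := by
  obtain ⟨p, ⟨s, hW⟩, hmax⟩ := exists_isPrefix_forall_listProd_lt W
  refine ⟨p, invList s, by rw [invList_invList, hW], Or.inr ?_, Or.inr ?_⟩
  · exact stronglyPositiveList_of_forall_isPrefix_lt fun q hq hqp =>
      hmax q (hq.trans ⟨s, hW⟩) hqp
  · refine stronglyPositiveList_invList_of_forall_isPrefix_lt_one fun q ⟨r, hr⟩ hq => ?_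
    have hlt := hmax (p ++ q) ⟨r, by rw [List.append_assoc, hr, hW]⟩ (by simpa using hq)
    rwa [listProd_append, mul_lt_iff_lt_one_left'] at hlt

/-- Suppose `W` is a reduced word. Then there exists a factorization `W = U₁U₂⁻¹`,
with `|W| = |U₁| + |U₂|`, such that each of `U₁`, `U₂` is either empty or strongly
positive. -/
theorem exists_factorization_stronglyPositive
    {I : Type*} {G : I → Type*} [∀ i, Group (G i)] [∀ i, Nontrivial (G i)]
    [LinearOrder (CoprodI G)]
    [CovariantClass (CoprodI G) (CoprodI G) (· * ·) (· ≤ ·)]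
    (W : CoprodI.Word G) :
    ∃ l₁ l₂ : List (Σ i, G i),
      W.toList = l₁ ++ invList l₂ ∧
      (l₁ = [] ∨ StronglyPositiveList l₁) ∧
      (l₂ = [] ∨ StronglyPositiveList l₂) :=
  exists_factorization_stronglyPositive_general W
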